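/- The Gaussian-form function π(h) = 1 − (1 − p)(1 − exp(−(|h|/a)^2)) with 0 < p < 1, a > 0, violates the transiogram triangle inequality π(2h) ≥ 2π(h) − 1 for all sufficiently small nonzero |h|; hence the Gaussian form is not a valid auto-transiogram of any stationary indicator random field with proportion p. -/

import Mathlib

/-! With `x = exp (-(|h|/a)^2)` one has `exp (-(2|h|/a)^2) = x^4`, and the triangle inequality
`π(2h) ≥ 2π(h) − 1` becomes `(1 - p) (1 - x) (x^3 + x^2 + x - 1) ≤ 0`. For small `h ≠ 0` the number
`x` lies in `(3/4, 1)`, where the cubic factor is positive. -/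

open Real

lemma two_mul_one_sub_lt_one_sub_pow_four {x : ℝ} (hx : 3 / 4 < x) (hx1 : x < 1) :
    2 * (1 - x) < 1 - x ^ 4 := by
  have hcubic : 0 < x ^ 3 + x ^ 2 + x - 1 := by nlinarith
  have hfactor : 1 - x ^ 4 - 2 * (1 - x) = (1 - x) * (x ^ 3 + x ^ 2 + x - 1) := by ring
  nlinarith [mul_pos (sub_pos.mpr hx1) hcubic]

lemma exp_neg_sq_two_mul (s : ℝ) : exp (-(2 * s) ^ 2) = exp (-s ^ 2) ^ 4 := by
  rw [← exp_nat_mul]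
  ring_nf

lemma three_div_four_lt_exp_neg_sq {s : ℝ} (hs : |s| < 1 / 2) : 3 / 4 < exp (-s ^ 2) := by
  have hsq : s ^ 2 < 1 / 4 := by nlinarith [sq_abs s, abs_nonneg s]
  linarith [add_one_le_exp (-s ^ 2)]

lemma exp_neg_sq_lt_one {s : ℝ} (hs : s ≠ 0) : exp (-s ^ 2) < 1 :=
  exp_lt_one_iff.mpr (neg_lt_zero.mpr (by positivity))

lemma gaussian_form_two_mul_lt {q s : ℝ} (hq : 0 < q) (hs : s ≠ 0) (hs2 : |s| < 1 / 2) :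
    1 - q * (1 - exp (-(2 * s) ^ 2)) < 2 * (1 - q * (1 - exp (-s ^ 2))) - 1 := by
  have hlt := two_mul_one_sub_lt_one_sub_pow_four (three_div_four_lt_exp_neg_sq hs2)
    (exp_neg_sq_lt_one hs)
  rw [exp_neg_sq_two_mul]
  nlinarith [mul_lt_mul_of_pos_left hlt hq]

theorem gaussian_form_invalid_transiogram_general
    {d : ℕ} (p a : ℝ) (hp1 : p < 1) (ha : 0 < a) :
    ∃ ε > 0, ∀ h : EuclideanSpace ℝ (Fin d), h ≠ 0 → ‖h‖ < ε →
      1 - (1 - p) * (1 - Real.exp (-(‖(2:ℝ) • h‖ / a)^2))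
        < 2 * (1 - (1 - p) * (1 - Real.exp (-(‖h‖ / a)^2))) - 1 := by
  refine ⟨a / 2, by positivity, fun h hne hlt => ?_⟩
  have hs : ‖h‖ / a ≠ 0 := div_ne_zero (norm_ne_zero_iff.mpr hne) ha.ne'
  have hs2 : |‖h‖ / a| < 1 / 2 := by
    rw [abs_of_nonneg (by positivity), div_lt_iff₀ ha]
    linarith
  rw [norm_smul, Real.norm_two, mul_div_assoc]
  exact gaussian_form_two_mul_lt (sub_pos.mpr hp1) hs hs2

/-- The Gaussian-form function `π(h) = 1 − (1 − p)(1 − exp(−(|h|/a)^2))` with `0 < p < 1`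
and `a > 0` violates the transiogram triangle inequality `π(2h) ≥ 2π(h) − 1` for all
sufficiently small nonzero `|h|`; hence the Gaussian form is not a valid auto-transiogram
of any stationary indicator random field with proportion `p`. -/
theorem gaussian_form_invalid_transiogram
    {d : ℕ} (p a : ℝ) (hp : 0 < p) (hp1 : p < 1) (ha : 0 < a) :
    ∃ ε > 0, ∀ h : EuclideanSpace ℝ (Fin d), h ≠ 0 → ‖h‖ < ε →
      1 - (1 - p) * (1 - Real.exp (-(‖(2:ℝ) • h‖ / a)^2))
        < 2 * (1 - (1 - p) * (1 - Real.exp (-(‖h‖ / a)^2))) - 1 :=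
  gaussian_form_invalid_transiogram_general p a hp1 ha
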